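/- arXiv:patt-sol/9311004 — 3 statements merged into one kernel-verified Lean document; each statement's English description precedes it below -/
import Mathlib

section
/- Let k ∈ ℝ² be nonzero and let c₁, c₂, x₁, x₂ ∈ ℝ² satisfy ‖x_i‖ = ‖c_i‖ and ⟨k, x_i⟩ = ⟨k, c_i⟩ for i = 1,2, and ⟨x₁, x₂⟩ = ⟨c₁, c₂⟩. If c₁ is not a scalar multiple of k, then either (x₁, x₂) = (c₁, c₂) or (x₁, x₂) = (γ_k(c₁), γ_k(c₂)), where γ_k is the orthogonal reflection across the line spanned by k. -/
/-- The orthogonal reflection of `ℝ²` across the line spanned by `k`: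
it fixes `k` and negates vectors orthogonal to `k`. -/
noncomputable def reflAcross (k : EuclideanSpace ℝ (Fin 2)) :
    EuclideanSpace ℝ (Fin 2) → EuclideanSpace ℝ (Fin 2) :=
  fun x => ((2 * (inner ℝ k x : ℝ)) / (inner ℝ k k : ℝ)) • k - x

lemma inner_coords (a b : EuclideanSpace ℝ (Fin 2)) :
    (inner ℝ a b : ℝ) = a 0 * b 0 + a 1 * b 1 := by
  simp [PiLp.inner_apply, Fin.sum_univ_two, RCLike.inner_apply, mul_comm]

lemma aux_eq (k a b : EuclideanSpace ℝ (Fin 2)) (hk : k 0 ^ 2 + k 1 ^ 2 ≠ 0)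
    (hd : k 0 * a 0 + k 1 * a 1 = k 0 * b 0 + k 1 * b 1)
    (hc : k 0 * a 1 - k 1 * a 0 = k 0 * b 1 - k 1 * b 0) : a = b := by
  ext i; fin_cases i
  · show a 0 = b 0
    exact mul_left_cancel₀ hk (by linear_combination (k 0) * hd - (k 1) * hc)
  · show a 1 = b 1
    exact mul_left_cancel₀ hk (by linear_combination (k 1) * hd + (k 0) * hc)

theorem two_point_rigidity (k c₁ c₂ x₁ x₂ : EuclideanSpace ℝ (Fin 2))
    (hk : k ≠ 0)
    (hn1 : ‖x₁‖ = ‖c₁‖) (hn2 : ‖x₂‖ = ‖c₂‖)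
    (hi1 : (inner ℝ k x₁ : ℝ) = (inner ℝ k c₁ : ℝ))
    (hi2 : (inner ℝ k x₂ : ℝ) = (inner ℝ k c₂ : ℝ))
    (h12 : (inner ℝ x₁ x₂ : ℝ) = (inner ℝ c₁ c₂ : ℝ))
    (hc1 : ∀ t : ℝ, c₁ ≠ t • k) :
    (x₁ = c₁ ∧ x₂ = c₂) ∨ (x₁ = reflAcross k c₁ ∧ x₂ = reflAcross k c₂) := by
  have hS : k 0 ^ 2 + k 1 ^ 2 ≠ 0 := by
    intro h
    have h0 : k 0 = 0 := by nlinarith [sq_nonneg (k 0), sq_nonneg (k 1)]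
    have h1 : k 1 = 0 := by nlinarith [sq_nonneg (k 0), sq_nonneg (k 1)]
    apply hk
    ext i; fin_cases i
    · show k 0 = (0 : EuclideanSpace ℝ (Fin 2)) 0; simp [h0]
    · show k 1 = (0 : EuclideanSpace ℝ (Fin 2)) 1; simp [h1]
  have hq1 : (inner ℝ x₁ x₁ : ℝ) = inner ℝ c₁ c₁ := by
    rw [real_inner_self_eq_norm_sq, real_inner_self_eq_norm_sq, hn1]
  have hq2 : (inner ℝ x₂ x₂ : ℝ) = inner ℝ c₂ c₂ := by
    rw [real_inner_self_eq_norm_sq, real_inner_self_eq_norm_sq, hn2]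
  simp only [inner_coords] at hi1 hi2 h12 hq1 hq2
  -- cross products
  have hd1 : k 0 * c₁ 1 - k 1 * c₁ 0 ≠ 0 := by
    intro h
    have hk01 : k 0 ≠ 0 ∨ k 1 ≠ 0 := by
      by_contra hcon
      push_neg at hcon
      exact hS (by rw [hcon.1, hcon.2]; ring)
    rcases hk01 with h0 | h1
    · apply hc1 (c₁ 0 / k 0)
      ext i; fin_cases i
      · show c₁ 0 = ((c₁ 0 / k 0) • k) 0
        simp only [PiLp.smul_apply, smul_eq_mul]; field_simp
      · show c₁ 1 = ((c₁ 0 / k 0) • k) 1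
        simp only [PiLp.smul_apply, smul_eq_mul]; field_simp; linear_combination h
    · apply hc1 (c₁ 1 / k 1)
      ext i; fin_cases i
      · show c₁ 0 = ((c₁ 1 / k 1) • k) 0
        simp only [PiLp.smul_apply, smul_eq_mul]; field_simp; linear_combination -h
      · show c₁ 1 = ((c₁ 1 / k 1) • k) 1
        simp only [PiLp.smul_apply, smul_eq_mul]; field_simp
  have he2 : (k 0 * x₁ 1 - k 1 * x₁ 0) ^ 2 = (k 0 * c₁ 1 - k 1 * c₁ 0) ^ 2 := by
    linear_combination (k 0 ^ 2 + k 1 ^ 2) * hq1 -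
      (k 0 * x₁ 0 + k 1 * x₁ 1 + k 0 * c₁ 0 + k 1 * c₁ 1) * hi1
  have hef : (k 0 * x₁ 1 - k 1 * x₁ 0) * (k 0 * x₂ 1 - k 1 * x₂ 0) =
      (k 0 * c₁ 1 - k 1 * c₁ 0) * (k 0 * c₂ 1 - k 1 * c₂ 0) := by
    linear_combination (k 0 ^ 2 + k 1 ^ 2) * h12 -
      (k 0 * x₂ 0 + k 1 * x₂ 1) * hi1 - (k 0 * c₁ 0 + k 1 * c₁ 1) * hi2
  have hcases : (k 0 * x₁ 1 - k 1 * x₁ 0) = (k 0 * c₁ 1 - k 1 * c₁ 0) ∨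
      (k 0 * x₁ 1 - k 1 * x₁ 0) = -(k 0 * c₁ 1 - k 1 * c₁ 0) := by
    rcases mul_eq_zero.mp (show ((k 0 * x₁ 1 - k 1 * x₁ 0) - (k 0 * c₁ 1 - k 1 * c₁ 0)) *
        ((k 0 * x₁ 1 - k 1 * x₁ 0) + (k 0 * c₁ 1 - k 1 * c₁ 0)) = 0 by
        linear_combination he2) with h | h
    · left; linarith
    · right; linarith
  have hkk : (inner ℝ k k : ℝ) = k 0 ^ 2 + k 1 ^ 2 := by rw [inner_coords]; ring
  have hrefl : ∀ c : EuclideanSpace ℝ (Fin 2), ∀ i,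
      reflAcross k c i = (2 * (k 0 * c 0 + k 1 * c 1)) / (k 0 ^ 2 + k 1 ^ 2) * k i - c i := by
    intro c i
    simp only [reflAcross, hkk, inner_coords, PiLp.sub_apply, PiLp.smul_apply, smul_eq_mul]
  rcases hcases with he | he
  · left
    have hf : (k 0 * x₂ 1 - k 1 * x₂ 0) = (k 0 * c₂ 1 - k 1 * c₂ 0) := by
      apply mul_left_cancel₀ hd1
      linear_combination hef - (k 0 * x₂ 1 - k 1 * x₂ 0) * he
    exact ⟨aux_eq k x₁ c₁ hS hi1 he, aux_eq k x₂ c₂ hS hi2 hf⟩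
  · right
    have hf : (k 0 * x₂ 1 - k 1 * x₂ 0) = -(k 0 * c₂ 1 - k 1 * c₂ 0) := by
      apply mul_left_cancel₀ hd1
      linear_combination (k 0 * x₂ 1 - k 1 * x₂ 0) * he - hef
    constructor
    · apply aux_eq k x₁ (reflAcross k c₁) hS
      · rw [hrefl, hrefl, hi1]; field_simp; ring
      · rw [hrefl, hrefl, he]; field_simp; ring
    · apply aux_eq k x₂ (reflAcross k c₂) hS
      · rw [hrefl, hrefl, hi2]; field_simp; ring
      · rw [hrefl, hrefl, hf]; field_simp; ring
end

section
/- Let l₁, l₂, n₂ be positive integers with l₂ > n₂ and l₁² = l₂² + n₂², and suppose that l₁ does not divide l₂² − n₂² and l₁ does not divide 2·l₂·n₂. Then there exist real numbers a, b such that exp(−i·l₁·a) = 1, exp(−i·l₁·b) = 1, exp(−i·(l₂·a − n₂·b)) = 1 and exp(−i·(n₂·a + l₂·b)) = 1, while exp(−i·(l₂·a + n₂·b)) ≠ 1 and exp(−i·(n₂·a − l₂·b)) ≠ 1. -/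
open Complex Real in
private lemma exp_aux (l₁ k : ℤ) (h : (l₁:ℝ) ≠ 0) :
    Complex.exp (-Complex.I * ((2 * π * k / l₁ : ℝ) : ℂ)) = 1 ↔ l₁ ∣ k := by
  rw [Complex.exp_eq_one_iff]
  constructor
  · rintro ⟨n, hn⟩
    have h2 : ((2 * π * k / l₁ : ℝ) : ℂ) * (-Complex.I) * Complex.I
        = (-(2 * π * n : ℝ) : ℂ) * (-Complex.I) * Complex.I := by
      push_cast at hn ⊢
      rw [show ((2:ℂ) * π * k / l₁) * (-Complex.I) = -Complex.I * ((2:ℂ) * π * k / l₁) by ring, hn]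
      ring
    have h3 := mul_right_cancel₀ Complex.I_ne_zero h2
    have h4 := mul_right_cancel₀ (neg_ne_zero.mpr Complex.I_ne_zero) h3
    rw [← Complex.ofReal_neg, Complex.ofReal_inj] at h4
    have hI : 2 * π * (k:ℝ) = -(2 * π * n) * l₁ := by
      field_simp at h4
      rw [h4]; ring
    have hk : (k:ℝ) = (l₁:ℝ) * (-n) := by
      have hp := Real.pi_pos
      nlinarith [hI]
    exact ⟨-n, by exact_mod_cast hk⟩
  · rintro ⟨m, rfl⟩
    refine ⟨-m, ?_⟩
    have hr : (2 * π * ((l₁ * m : ℤ) : ℝ) / l₁ : ℝ) = 2 * π * m := by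
      push_cast
      field_simp
    rw [hr]
    push_cast
    ring

open Complex in
theorem exists_translation_fixing_four_modes (l₁ l₂ n₂ : ℤ)
    (h₁ : 0 < l₁) (h₂ : 0 < l₂) (h₃ : 0 < n₂) (hln : n₂ < l₂)
    (hκ : l₁ ^ 2 = l₂ ^ 2 + n₂ ^ 2)
    (hd1 : ¬ (l₁ ∣ l₂ ^ 2 - n₂ ^ 2)) (hd2 : ¬ (l₁ ∣ 2 * l₂ * n₂)) :
    ∃ a b : ℝ,
      exp (-I * l₁ * a) = 1 ∧
      exp (-I * l₁ * b) = 1 ∧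
      exp (-I * (l₂ * a - n₂ * b)) = 1 ∧
      exp (-I * (n₂ * a + l₂ * b)) = 1 ∧
      exp (-I * (l₂ * a + n₂ * b)) ≠ 1 ∧
      exp (-I * (n₂ * a - l₂ * b)) ≠ 1 := by
  have hl₁ : (l₁:ℝ) ≠ 0 := by exact_mod_cast h₁.ne'
  have hl₁c : (l₁:ℂ) ≠ 0 := by exact_mod_cast h₁.ne'
  set a : ℝ := 2 * Real.pi * l₂ / l₁ with ha
  set b : ℝ := -(2 * Real.pi * n₂ / l₁) with hb
  have e1 : (-I * l₁ * a : ℂ) = -I * ((2 * Real.pi * ((l₁ * l₂ : ℤ):ℝ) / l₁ : ℝ) : ℂ) := by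
    rw [ha]; push_cast; ring
  have e2 : (-I * l₁ * b : ℂ) = -I * ((2 * Real.pi * ((-(l₁ * n₂) : ℤ):ℝ) / l₁ : ℝ) : ℂ) := by
    rw [hb]; push_cast; ring
  have e3 : (-I * (l₂ * a - n₂ * b) : ℂ)
      = -I * ((2 * Real.pi * ((l₂^2 + n₂^2 : ℤ):ℝ) / l₁ : ℝ) : ℂ) := by
    rw [ha, hb]; push_cast; ring
  have e4 : (-I * (n₂ * a + l₂ * b) : ℂ)
      = -I * ((2 * Real.pi * (((0:ℤ)):ℝ) / l₁ : ℝ) : ℂ) := by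
    rw [ha, hb]; push_cast; ring
  have e5 : (-I * (l₂ * a + n₂ * b) : ℂ)
      = -I * ((2 * Real.pi * ((l₂^2 - n₂^2 : ℤ):ℝ) / l₁ : ℝ) : ℂ) := by
    rw [ha, hb]; push_cast; ring
  have e6 : (-I * (n₂ * a - l₂ * b) : ℂ)
      = -I * ((2 * Real.pi * ((2 * l₂ * n₂ : ℤ):ℝ) / l₁ : ℝ) : ℂ) := by
    rw [ha, hb]; push_cast; ring
  refine ⟨a, b, ?_, ?_, ?_, ?_, ?_, ?_⟩
  · rw [e1]; exact (exp_aux l₁ (l₁ * l₂) hl₁).mpr ⟨l₂, rfl⟩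
  · rw [e2]; exact (exp_aux l₁ (-(l₁ * n₂)) hl₁).mpr ⟨-n₂, by ring⟩
  · rw [e3]; exact (exp_aux l₁ (l₂^2 + n₂^2) hl₁).mpr ⟨l₁, by linarith [hκ]⟩
  · rw [e4]; exact (exp_aux l₁ 0 hl₁).mpr ⟨0, by ring⟩
  · rw [e5]; exact fun hc => hd1 ((exp_aux l₁ (l₂^2 - n₂^2) hl₁).mp hc)
  · rw [e6]; exact fun hc => hd2 ((exp_aux l₁ (2 * l₂ * n₂) hl₁).mp hc)
end

section
/- Let l₁, l₂, n₂ be positive integers with l₂ > n₂ > 0 and l₁² = l₂² + n₂². Assume that the set of integer points (x, y) ∈ ℤ² with x² + y² = l₁² is exactly {±(l₁,0), ±(0,l₁), ±(l₂,n₂), ±(l₂,−n₂), ±(n₂,l₂), ±(n₂,−l₂)}. Then l₁ does not divide l₂² − n₂² and l₁ does not divide 2·l₂·n₂. -/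
lemma no_sq_eq_three_sq : ∀ l n : ℕ, l ^ 2 = 3 * n ^ 2 → l = 0 := by
  intro l
  induction l using Nat.strong_induction_on with
  | _ l ih =>
    intro n h
    rcases Nat.eq_zero_or_pos l with hl | hl
    · exact hl
    have h3 : (3 : ℕ) ∣ l := by
      have : (3 : ℕ) ∣ l ^ 2 := ⟨n ^ 2, h⟩
      exact (Nat.Prime.dvd_of_dvd_pow (by norm_num)) this
    obtain ⟨m, rfl⟩ := h3
    have hm : 0 < m := by omega
    have hn2 : n ^ 2 = 3 * m ^ 2 := by nlinarith
    have hnlt : n < 3 * m := by nlinarith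
    have hn0 := ih n hnlt m hn2
    subst hn0
    have : m = 0 := by nlinarith
    omega

lemma int_no_sq_eq_three_sq (l n : ℤ) (h : l ^ 2 = 3 * n ^ 2) : l = 0 := by
  have h' : l.natAbs ^ 2 = 3 * n.natAbs ^ 2 := by
    have := congrArg Int.natAbs h
    simpa [Int.natAbs_mul, Int.natAbs_pow] using this
  have := no_sq_eq_three_sq l.natAbs n.natAbs h'
  omega

theorem non_divisibility_from_lattice_points (l₁ l₂ n₂ : ℤ)
    (h₁ : 0 < n₂) (h₂ : n₂ < l₂) (h₃ : 0 < l₁)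
    (hκ : l₁ ^ 2 = l₂ ^ 2 + n₂ ^ 2)
    (hlattice : {p : ℤ × ℤ | p.1 ^ 2 + p.2 ^ 2 = l₁ ^ 2} =
      {(l₁, 0), (-l₁, 0), (0, l₁), (0, -l₁),
       (l₂, n₂), (-l₂, -n₂), (l₂, -n₂), (-l₂, n₂),
       (n₂, l₂), (-n₂, -l₂), (n₂, -l₂), (-n₂, l₂)}) :
    ¬ (l₁ ∣ l₂ ^ 2 - n₂ ^ 2) ∧ ¬ (l₁ ∣ 2 * l₂ * n₂) := by
  set a := l₂ ^ 2 - n₂ ^ 2 with ha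
  set b := 2 * l₂ * n₂ with hb
  have hab : a ^ 2 + b ^ 2 = (l₁ ^ 2) ^ 2 := by rw [ha, hb, hκ]; ring
  have ha0 : 0 < a := by rw [ha]; nlinarith
  have hb0 : 0 < b := by rw [hb]; nlinarith
  have key : l₁ ∣ a → l₁ ∣ b → False := by
    rintro ⟨x, hx⟩ ⟨y, hy⟩
    have hx0 : 0 < x := by nlinarith
    have hy0 : 0 < y := by nlinarith
    have hcirc : x ^ 2 + y ^ 2 = l₁ ^ 2 := by
      have hbig : (l₁ * x) ^ 2 + (l₁ * y) ^ 2 = (l₁ ^ 2) ^ 2 := by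
        rw [← hx, ← hy]; exact hab
      have hl2 : l₁ ^ 2 ≠ 0 := by positivity
      have : l₁ ^ 2 * (x ^ 2 + y ^ 2) = l₁ ^ 2 * l₁ ^ 2 := by nlinarith [hbig]
      exact mul_left_cancel₀ hl2 this
    have hmem : ((x, y) : ℤ × ℤ) ∈ {p : ℤ × ℤ | p.1 ^ 2 + p.2 ^ 2 = l₁ ^ 2} := hcirc
    rw [hlattice] at hmem
    simp only [Set.mem_insert_iff, Set.mem_singleton_iff, Prod.mk.injEq] at hmem
    rcases hmem with ⟨hx1, hy1⟩ | ⟨hx1, hy1⟩ | ⟨hx1, hy1⟩ | ⟨hx1, hy1⟩ | ⟨hx1, hy1⟩ |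
      ⟨hx1, hy1⟩ | ⟨hx1, hy1⟩ | ⟨hx1, hy1⟩ | ⟨hx1, hy1⟩ | ⟨hx1, hy1⟩ | ⟨hx1, hy1⟩ | ⟨hx1, hy1⟩
    · linarith
    · linarith
    · linarith
    · linarith
    · -- (x, y) = (l₂, n₂) : then l₁ = 2 l₂ and n₂² = 3 l₂², impossible
      have hy' := hy
      rw [hb, hy1] at hy'
      have hl : l₁ = 2 * l₂ :=
        mul_left_cancel₀ (by omega : n₂ ≠ 0) (by linear_combination -hy')
      nlinarith [hκ, hl]
    · linarith
    · linarith
    · linarith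
    · -- (x, y) = (n₂, l₂) : then l₁ = 2 n₂ and l₂² = 3 n₂², impossible
      have hy' := hy
      rw [hb, hy1] at hy'
      have hl : l₁ = 2 * n₂ :=
        mul_left_cancel₀ (by omega : l₂ ≠ 0) (by linear_combination -hy')
      have hx' := hx
      rw [ha, hx1] at hx'
      have h32 : l₂ ^ 2 = 3 * n₂ ^ 2 := by nlinarith [hx', hl]
      have := int_no_sq_eq_three_sq l₂ n₂ h32
      omega
    · linarith
    · linarith
    · linarith
  have step : ∀ u v : ℤ, u ^ 2 + v ^ 2 = (l₁ ^ 2) ^ 2 → l₁ ∣ u → l₁ ∣ v := by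
    intro u v huv hu
    have h2 : l₁ ^ 2 ∣ v ^ 2 := by
      have hveq : v ^ 2 = (l₁ ^ 2) ^ 2 - u ^ 2 := by linarith
      rw [hveq]
      exact dvd_sub (dvd_pow (dvd_refl _) two_ne_zero) (pow_dvd_pow_of_dvd hu 2)
    exact (Int.pow_dvd_pow_iff (two_ne_zero)).mp h2
  constructor
  · intro hda
    exact key hda (step a b hab hda)
  · intro hdb
    exact key (step b a (by linarith) hdb) hdb
end
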